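/- Under Assumption A, if (u,ℓ) and (u,m) are both solutions of the free boundary problem (FBP) with the same density component u, then ℓ_t = m_t for all t ≥ 0. -/

import Mathlib

open MeasureTheory Set Filter Topology

noncomputable section

/-- Points of `ℝ^d`. -/
abbrev Vec (d : ℕ) := EuclideanSpace ℝ (Fin d)

/-- Assumption A on the fitness function `F`, the branching density `ρ`,
the initial density `u₀` and the initial boundary value `lam₀`. -/
structure AssumptionA (d : ℕ) (F : Vec d → ℝ) (ρ : Vec d → Vec d → ℝ)
    (u₀ : Vec d → ℝ) (lam₀ : ℝ) : Prop where
  F_cont : Continuous F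
  F_unbdd_below : ∀ c : ℝ, ∃ x, F x < c
  F_unbdd_above : ∀ c : ℝ, ∃ x, c < F x
  F_level_null : ∀ a : ℝ, volume (F ⁻¹' {a}) = 0
  ρ_meas : Measurable (Function.uncurry ρ)
  ρ_nonneg : ∀ x y, 0 ≤ ρ x y
  ρ_int : ∀ x, Integrable (ρ x)
  ρ_prob : ∀ x, ∫ y, ρ x y = 1
  ρ_dom : ∃ (ρt : Vec d → ℝ) (c : ℝ), (∀ z, 0 ≤ ρt z) ∧ Integrable ρt ∧
    (∫ z, ρt z = 1) ∧ ∀ x y, ρ x y ≤ c * ρt (y - x)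
  ρ_unif_cont : ∀ ε : ℝ, 0 < ε → ∃ δ : ℝ, 0 < δ ∧
    ∀ x y₁ y₂ : Vec d, dist y₁ y₂ < δ → |ρ x y₁ - ρ x y₂| < ε
  ρ_push_pos : ∀ a : ℝ, ∀ x : Vec d, a < F x → 0 < ∫ y in F ⁻¹' Ioi a, ρ x y
  u₀_nonneg : ∀ x, 0 ≤ u₀ x
  u₀_bdd : ∃ C : ℝ, ∀ x, u₀ x ≤ C
  u₀_int : Integrable u₀
  u₀_prob : ∫ x, u₀ x = 1
  u₀_cont : ContinuousOn u₀ (F ⁻¹' Ioi lam₀)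
  u₀_vanish : ∀ x, F x < lam₀ → u₀ x = 0
  u₀_charge : ∀ δ : ℝ, 0 < δ → ∀ l : ℝ, lam₀ ≤ l → 0 < ∫ x in F ⁻¹' Ioo l (l + δ), u₀ x

/-- `(u, ℓ)` is an admissible pair solving the free boundary problem (FBP):
`ℓ` is càdlàg, `u` is nonnegative, locally bounded in time, continuous in `x`
and continuously differentiable in `t` on `{(x,t) : F x > ℓ t}`, and
(i) `∂ₜ u(x,t) = ∫ u(y,t) ρ(y,x) dy` for `F x > ℓ t`, `t > 0`;
(ii) `u(x,t) = 0` for `F x ≤ ℓ t`, `t > 0`;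
(iii) `∫ u(x,t) dx = 1` for `t > 0`;
(iv) `u(·,0) = u₀`, `ℓ 0 = lam₀`. -/
structure IsFBPSolution (d : ℕ) (F : Vec d → ℝ) (ρ : Vec d → Vec d → ℝ)
    (u₀ : Vec d → ℝ) (lam₀ : ℝ) (u : Vec d → ℝ → ℝ) (ℓ : ℝ → ℝ) : Prop where
  ℓ_rc : ∀ t : ℝ, 0 ≤ t → ContinuousWithinAt ℓ (Ici t) t
  ℓ_ll : ∀ t : ℝ, 0 < t → ∃ L : ℝ, Tendsto ℓ (𝓝[<] t) (𝓝 L)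
  u_nonneg : ∀ x, ∀ t : ℝ, 0 ≤ t → 0 ≤ u x t
  u_bdd : ∀ T : ℝ, 0 < T → ∃ C : ℝ, ∀ x, ∀ t ∈ Icc (0:ℝ) T, u x t ≤ C
  u_meas : ∀ t : ℝ, 0 ≤ t → Measurable fun x => u x t
  u_cont_x : ∀ t : ℝ, 0 ≤ t → ContinuousOn (fun x => u x t) (F ⁻¹' Ioi (ℓ t))
  pde : ∀ x, ∀ t : ℝ, 0 < t → ℓ t < F x →
    HasDerivAt (fun s => u x s) (∫ y, u y t * ρ y x) t
  pde_cont : ∀ x, ContinuousOn (fun t => ∫ y, u y t * ρ y x) {t : ℝ | 0 < t ∧ ℓ t < F x}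
  vanish : ∀ x, ∀ t : ℝ, 0 < t → F x ≤ ℓ t → u x t = 0
  mass : ∀ t : ℝ, 0 < t → ∫ x, u x t = 1
  init_u : ∀ x, u x 0 = u₀ x
  init_ℓ : ℓ 0 = lam₀

/-!
Suppose `ℓ t < m t` for some `t > 0` and pick `c` strictly between. By right continuity,
`ℓ < c < m` on some interval `[t, b]`. There `u` vanishes on `{F ≤ c}` (below `m`), while on
`{F > c}` it solves the equation for `ℓ`, whose right-hand side is nonnegative, so `u(x, ·)`
is nondecreasing. Conservation of mass then forces `u(·, t) = u(·, b)` a.e., hence the flux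
`∫ u(y, s) ρ(y, x) dy` vanishes for a.e. `x` with `F x > c` and `t < s < b`. Integrating over
`{F > c}` and using that `ρ` sends positive mass from `{F > c}` into `{F > c}` gives
`u(·, s) = 0` a.e., contradicting `∫ u(·, s) = 1`.
-/

lemma MonotoneOn.hasDerivAt_eq_zero_of_le {φ : ℝ → ℝ} {a b s φ' : ℝ}
    (hφ : MonotoneOn φ (Icc a b)) (hba : φ b ≤ φ a) (hs : s ∈ Ioo a b)
    (hderiv : HasDerivAt φ φ' s) : φ' = 0 := by
  have hab : a ≤ b := hs.1.le.trans hs.2.le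
  have hconst : φ =ᶠ[𝓝 s] fun _ => φ a := by
    filter_upwards [Ioo_mem_nhds hs.1 hs.2] with r hr
    have hr' := Ioo_subset_Icc_self hr
    exact le_antisymm ((hφ hr' (right_mem_Icc.2 hab) hr.2.le).trans hba)
      (hφ (left_mem_Icc.2 hab) hr' hr.1.le)
  exact hderiv.unique ((hasDerivAt_const s (φ a)).congr_of_eventuallyEq hconst)

lemma ae_eq_zero_of_ae_integral_mul_eq_zero {α β : Type*} [MeasurableSpace α]
    [MeasurableSpace β] {μ : Measure α} {ν : Measure β} [SFinite μ] [SFinite ν]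
    {g : α → ℝ} {K : α → β → ℝ} {S : Set β} (hg : Measurable g) (hg0 : ∀ y, 0 ≤ g y)
    (hK : Measurable (Function.uncurry K)) (hK0 : ∀ y x, 0 ≤ K y x)
    (hint : ∀ x, Integrable (fun y => g y * K y x) μ)
    (hzero : ∀ᵐ x ∂ν.restrict S, ∫ y, g y * K y x ∂μ = 0) :
    ∀ᵐ y ∂μ, 0 < ∫ x in S, K y x ∂ν → g y = 0 := by
  have hlin : ∀ᵐ x ∂ν.restrict S,
      ∫⁻ y, ENNReal.ofReal (g y) * ENNReal.ofReal (K y x) ∂μ = 0 := by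
    filter_upwards [hzero] with x hx
    simp_rw [← ENNReal.ofReal_mul (hg0 _)]
    rw [← ofReal_integral_eq_lintegral_ofReal (hint x)
      (ae_of_all _ fun y => mul_nonneg (hg0 y) (hK0 y x)), hx, ENNReal.ofReal_zero]
  have hswap : ∫⁻ y, ENNReal.ofReal (g y) * ∫⁻ x in S, ENNReal.ofReal (K y x) ∂ν ∂μ = 0 := by
    simp_rw [← lintegral_const_mul' _ _ ENNReal.ofReal_ne_top]
    rw [lintegral_lintegral_swap (by fun_prop), lintegral_congr_ae hlin, lintegral_zero]
  filter_upwards [(lintegral_eq_zero_iff (by fun_prop)).1 hswap] with y hy hpos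
  have hKpos : ∫⁻ x in S, ENNReal.ofReal (K y x) ∂ν ≠ 0 := by
    rw [integral_eq_lintegral_of_nonneg_ae (ae_of_all _ (hK0 y)) (by fun_prop)] at hpos
    exact fun h => by simp [h] at hpos
  exact le_antisymm (ENNReal.ofReal_eq_zero.1 ((mul_eq_zero.1 hy).resolve_right hKpos)) (hg0 y)

namespace IsFBPSolution

variable {d : ℕ} {F : Vec d → ℝ} {ρ : Vec d → Vec d → ℝ} {u₀ : Vec d → ℝ} {lam₀ : ℝ}
  {u : Vec d → ℝ → ℝ} {ℓ m : ℝ → ℝ}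

lemma integrable (h : IsFBPSolution d F ρ u₀ lam₀ u ℓ) {t : ℝ} (ht : 0 < t) :
    Integrable (fun x => u x t) :=
  Integrable.of_integral_ne_zero (by rw [h.mass t ht]; exact one_ne_zero)

lemma integrable_mul_kernel (hA : AssumptionA d F ρ u₀ lam₀)
    (h : IsFBPSolution d F ρ u₀ lam₀ u ℓ) {t : ℝ} (ht : 0 < t) (x : Vec d) :
    Integrable (fun y => u y t * ρ y x) := by
  obtain ⟨ρt, cρ, -, hρt, -, hdom⟩ := hA.ρ_dom
  obtain ⟨C, hC⟩ := h.u_bdd t ht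
  have hC0 : 0 ≤ C := (h.u_nonneg x t ht.le).trans (hC x t ⟨ht.le, le_rfl⟩)
  refine (((hρt.comp_sub_left x).const_mul cρ).const_mul C).mono' ?_ (ae_of_all _ fun y => ?_)
  · exact ((h.u_meas t ht.le).mul
      (hA.ρ_meas.comp (measurable_id.prodMk measurable_const))).aestronglyMeasurable
  · rw [Real.norm_of_nonneg (mul_nonneg (h.u_nonneg y t ht.le) (hA.ρ_nonneg y x))]
    exact mul_le_mul (hC y t ⟨ht.le, le_rfl⟩) (hdom y x) (hA.ρ_nonneg y x) hC0

lemma monotoneOn_Icc_of_boundary_lt (hA : AssumptionA d F ρ u₀ lam₀)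
    (h : IsFBPSolution d F ρ u₀ lam₀ u ℓ) {a b : ℝ} {x : Vec d} (ha : 0 < a)
    (hx : ∀ s ∈ Icc a b, ℓ s < F x) :
    MonotoneOn (u x) (Icc a b) := by
  have hderiv : ∀ s ∈ Icc a b, HasDerivAt (u x) (∫ y, u y s * ρ y x) s := fun s hs =>
    h.pde x s (ha.trans_le hs.1) (hx s hs)
  refine monotoneOn_of_hasDerivWithinAt_nonneg (convex_Icc a b)
    (fun s hs => (hderiv s hs).continuousAt.continuousWithinAt)
    (fun s hs => (hderiv s (interior_subset hs)).hasDerivWithinAt) (fun s hs => ?_)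
  have hs0 : 0 ≤ s := ha.le.trans (interior_subset hs).1
  exact integral_nonneg fun y => mul_nonneg (h.u_nonneg y s hs0) (hA.ρ_nonneg y x)

lemma ae_flux_eq_zero (hA : AssumptionA d F ρ u₀ lam₀) (h : IsFBPSolution d F ρ u₀ lam₀ u ℓ)
    {t b c s : ℝ} (ht : 0 < t) (hℓc : ∀ r ∈ Icc t b, ℓ r < c)
    (hvan : ∀ x, F x ≤ c → ∀ r ∈ Icc t b, u x r = 0) (hs : s ∈ Ioo t b) :
    ∀ᵐ x, c < F x → ∫ y, u y s * ρ y x = 0 := by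
  have htb : t ≤ b := hs.1.le.trans hs.2.le
  have hmono : ∀ x, c < F x → MonotoneOn (u x) (Icc t b) := fun x hx =>
    h.monotoneOn_Icc_of_boundary_lt hA ht fun r hr => (hℓc r hr).trans hx
  have hle : ∀ x, u x t ≤ u x b := by
    intro x
    rcases le_or_gt (F x) c with hx | hx
    · rw [hvan x hx t (left_mem_Icc.2 htb), hvan x hx b (right_mem_Icc.2 htb)]
    · exact hmono x hx (left_mem_Icc.2 htb) (right_mem_Icc.2 htb) htb
  have hb : 0 < b := ht.trans_le htb
  have hae : (fun x => u x t) =ᵐ[volume] fun x => u x b :=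
    (integral_eq_iff_of_ae_le (h.integrable ht) (h.integrable hb) (ae_of_all _ hle)).1
      (by rw [h.mass t ht, h.mass b hb])
  filter_upwards [hae] with x hx hcx
  exact (hmono x hcx).hasDerivAt_eq_zero_of_le hx.ge hs
    (h.pde x s (ht.trans hs.1) ((hℓc s (Ioo_subset_Icc_self hs)).trans hcx))

lemma ae_eq_zero_of_ae_flux_eq_zero (hA : AssumptionA d F ρ u₀ lam₀)
    (h : IsFBPSolution d F ρ u₀ lam₀ u ℓ) {s c : ℝ} (hs : 0 < s)
    (hvan : ∀ x, F x ≤ c → u x s = 0) (hflux : ∀ᵐ x, c < F x → ∫ y, u y s * ρ y x = 0) :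
    (fun y => u y s) =ᵐ[volume] 0 := by
  have hS : MeasurableSet (F ⁻¹' Ioi c) := hA.F_cont.measurable measurableSet_Ioi
  filter_upwards [ae_eq_zero_of_ae_integral_mul_eq_zero (h.u_meas s hs.le)
    (fun y => h.u_nonneg y s hs.le) hA.ρ_meas hA.ρ_nonneg (h.integrable_mul_kernel hA hs)
    ((ae_restrict_iff' hS).2 hflux)] with y hy
  rcases le_or_gt (F y) c with hyc | hyc
  · exact hvan y hyc
  · exact hy (hA.ρ_push_pos c y hyc)

lemma boundary_le_boundary (hA : AssumptionA d F ρ u₀ lam₀)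
    (hℓ : IsFBPSolution d F ρ u₀ lam₀ u ℓ) (hm : IsFBPSolution d F ρ u₀ lam₀ u m)
    {t : ℝ} (ht : 0 < t) : m t ≤ ℓ t := by
  by_contra! hlt
  obtain ⟨c, hℓc, hcm⟩ := exists_between hlt
  obtain ⟨b, htb, hsep⟩ := mem_nhdsGE_iff_exists_Icc_subset.1
    (((hℓ.ℓ_rc t ht.le).eventually_lt_const hℓc).and ((hm.ℓ_rc t ht.le).eventually_const_lt hcm))
  obtain ⟨s, hs⟩ := nonempty_Ioo.2 htb
  have hs0 : 0 < s := ht.trans hs.1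
  have hvan : ∀ x, F x ≤ c → ∀ r ∈ Icc t b, u x r = 0 := fun x hx r hr =>
    hm.vanish x r (ht.trans_le hr.1) (hx.trans (hsep hr).2.le)
  have hzero := hℓ.ae_eq_zero_of_ae_flux_eq_zero hA hs0
    (fun x hx => hvan x hx s (Ioo_subset_Icc_self hs))
    (hℓ.ae_flux_eq_zero hA ht (fun r hr => (hsep hr).1) hvan hs)
  have hmass := hℓ.mass s hs0
  rw [integral_congr_ae hzero] at hmass
  simp at hmass

end IsFBPSolution

/-- Two FBP solutions sharing the same density component have the same boundary. -/
theorem fbp_boundary_determined_by_density {d : ℕ} (F : Vec d → ℝ) (ρ : Vec d → Vec d → ℝ)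
    (u₀ : Vec d → ℝ) (lam₀ : ℝ) (hA : AssumptionA d F ρ u₀ lam₀)
    (u : Vec d → ℝ → ℝ) (ℓ m : ℝ → ℝ)
    (hℓ : IsFBPSolution d F ρ u₀ lam₀ u ℓ) (hm : IsFBPSolution d F ρ u₀ lam₀ u m) :
    ∀ t : ℝ, 0 ≤ t → ℓ t = m t := by
  intro t ht
  rcases ht.eq_or_lt with rfl | ht
  · rw [hℓ.init_ℓ, hm.init_ℓ]
  · exact le_antisymm (hm.boundary_le_boundary hA hℓ ht) (hℓ.boundary_le_boundary hA hm ht)
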